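/- arXiv:2501.00419 — 8 statements merged into one kernel-verified Lean document; each statement's English description precedes it below -/
import Mathlib

section
/- If G is a graph, F is a family of graphs, X is a subset of V(G), and Y is a subset of the closed neighbourhood N[X], then the F-isolation number of G is at most |X| plus the F-isolation number of G − Y. -/
open SimpleGraph

/-- `G` contains a copy of `H` as a (not necessarily induced) subgraph. -/
def containsCopy {W V : Type*} (H : SimpleGraph W) (G : SimpleGraph V) : Prop :=
  ∃ f : W → V, Function.Injective f ∧ ∀ a b, H.Adj a b → G.Adj (f a) (f b)

/-- The closed neighbourhood `N[D]` of a set of vertices `D`. -/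
def closedNbhd {V : Type*} (G : SimpleGraph V) (D : Set V) : Set V :=
  {v | v ∈ D ∨ ∃ d ∈ D, G.Adj d v}

/-- `D` is an `F`-isolating set of `G`: `G - N[D]` contains no copy of a member of the
family `F`. -/
def IsIsolating {V ι : Type*} {W : ι → Type*} (G : SimpleGraph V)
    (F : ∀ i, SimpleGraph (W i)) (D : Set V) : Prop :=
  ∀ i, ¬ containsCopy (F i) (G.induce (closedNbhd G D)ᶜ)

/-- The `F`-isolation number `ι(G, F)`. -/
noncomputable def iotaF {V ι : Type*} {W : ι → Type*} (G : SimpleGraph V)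
    (F : ∀ i, SimpleGraph (W i)) : ℕ :=
  sInf {n | ∃ D : Finset V, D.card = n ∧ IsIsolating G F ↑D}

/-! If `D'` isolates `G − Y`, then `X ∪ D'` isolates `G`: every vertex outside `N[X ∪ D']` lies
outside `N[X] ⊇ Y`, hence is a vertex of `G − Y` outside its closed neighbourhood of `D'`, so a
copy of a member of `F` in `G − N[X ∪ D']` is also one in `(G − Y) − N[D']`. Taking `D'` of size
`ι(G − Y, F)` gives the bound. When some member of `F` has no vertices nothing is isolating
and `ι(G, F) = 0`; otherwise the whole (finite) vertex set of `G − Y` is isolating, so a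
minimum isolating set exists. -/

lemma containsCopy.of_injective_hom {U V W : Type*} {H : SimpleGraph U} {G : SimpleGraph V}
    {G' : SimpleGraph W} (h : containsCopy H G) (φ : G →g G') (hφ : Function.Injective φ) :
    containsCopy H G' := by
  obtain ⟨f, hf, hadj⟩ := h
  exact ⟨φ ∘ f, hφ.comp hf, fun a b hab => φ.map_adj (hadj a b hab)⟩

section Isolating

variable {V ι : Type*} {W : ι → Type*} (G : SimpleGraph V) (F : ∀ i, SimpleGraph (W i))

lemma not_isIsolating_of_isEmpty (i : ι) [IsEmpty (W i)] (D : Set V) : ¬ IsIsolating G F D :=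
  fun hD => hD i ⟨isEmptyElim, fun a => isEmptyElim a, fun a => isEmptyElim a⟩

lemma isIsolating_univ (hF : ∀ i, Nonempty (W i)) : IsIsolating G F Set.univ := by
  rintro i ⟨f, -, -⟩
  obtain ⟨a⟩ := hF i
  exact (f a).2 (Or.inl trivial)

lemma IsIsolating.union_image_val {X Y : Set V} {D' : Set ↥Yᶜ} (hY : Y ⊆ closedNbhd G X)
    (hD' : IsIsolating (G.induce Yᶜ) F D') : IsIsolating G F (X ∪ Subtype.val '' D') := by
  set D := X ∪ Subtype.val '' D'
  have hYc : ∀ v : ↥(closedNbhd G D)ᶜ, (v : V) ∈ Yᶜ := by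
    rintro ⟨v, hv⟩ hvY
    rcases hY hvY with hvX | ⟨d, hdX, hdv⟩
    · exact hv (Or.inl (Or.inl hvX))
    · exact hv (Or.inr ⟨d, Or.inl hdX, hdv⟩)
  have hnbhd : ∀ v : ↥(closedNbhd G D)ᶜ,
      (⟨v, hYc v⟩ : ↥Yᶜ) ∈ (closedNbhd (G.induce Yᶜ) D')ᶜ := by
    rintro ⟨v, hv⟩ (hvD' | ⟨d, hdD', hdv⟩)
    · exact hv (Or.inl (Or.inr ⟨_, hvD', rfl⟩))
    · exact hv (Or.inr ⟨d, Or.inr ⟨d, hdD', rfl⟩, hdv⟩)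
  let φ : G.induce (closedNbhd G D)ᶜ →g (G.induce Yᶜ).induce (closedNbhd (G.induce Yᶜ) D')ᶜ :=
    { toFun := fun v => ⟨⟨v, hYc v⟩, hnbhd v⟩
      map_rel' := id }
  have hφ : Function.Injective φ := fun u v huv =>
    Subtype.ext (congrArg (fun w => ((w : ↥Yᶜ) : V)) (congrArg Subtype.val huv))
  exact fun i hcopy => hD' i (hcopy.of_injective_hom φ hφ)

lemma iotaF_le_card {D : Finset V} (hD : IsIsolating G F ↑D) : iotaF G F ≤ D.card :=
  Nat.sInf_le ⟨D, rfl, hD⟩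

lemma iotaF_eq_zero_of_isEmpty (i : ι) [IsEmpty (W i)] : iotaF G F = 0 := by
  have hnone : {n | ∃ D : Finset V, D.card = n ∧ IsIsolating G F ↑D} = ∅ :=
    Set.eq_empty_of_forall_notMem fun _ ⟨D, _, hD⟩ => not_isIsolating_of_isEmpty G F i _ hD
  rw [iotaF, hnone, Nat.sInf_empty]

lemma exists_isIsolating_card_eq_iotaF [Finite V] (hF : ∀ i, Nonempty (W i)) :
    ∃ D : Finset V, D.card = iotaF G F ∧ IsIsolating G F ↑D := by
  have := Fintype.ofFinite V
  have hne : {n | ∃ D : Finset V, D.card = n ∧ IsIsolating G F ↑D}.Nonempty :=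
    ⟨_, Finset.univ, rfl, by simpa using isIsolating_univ G F hF⟩
  exact Nat.sInf_mem hne

end Isolating

/-- If `X ⊆ V(G)` and `Y ⊆ N[X]`, then `ι(G, F) ≤ |X| + ι(G − Y, F)`. -/
theorem stmt0 {V : Type*} [Fintype V] (G : SimpleGraph V) {ι : Type*} {W : ι → Type*}
    (F : ∀ i, SimpleGraph (W i)) (X : Finset V) (Y : Set V)
    (hY : Y ⊆ closedNbhd G ↑X) :
    iotaF G F ≤ X.card + iotaF (G.induce Yᶜ) F := by
  classical
  by_cases hF : ∀ i, Nonempty (W i)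
  · obtain ⟨D', hcard, hD'⟩ := exists_isIsolating_card_eq_iotaF (G.induce Yᶜ) F hF
    have hD : IsIsolating G F ↑(X ∪ D'.image Subtype.val) := by
      simpa using hD'.union_image_val G F hY
    calc iotaF G F ≤ (X ∪ D'.image Subtype.val).card := iotaF_le_card G F hD
      _ ≤ X.card + (D'.image Subtype.val).card := Finset.card_union_le _ _
      _ ≤ X.card + iotaF (G.induce Yᶜ) F := by
          rw [← hcard]
          gcongr
          exact Finset.card_image_le
  · push Not at hF
    obtain ⟨i, hi⟩ := hF
    rw [iotaF_eq_zero_of_isEmpty G F i]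
    exact Nat.zero_le _
end

section
/- If a graph G has at most 5 vertices, then the P3-isolation number of G is at most 1. -/
open SimpleGraph

/-- `G` contains a copy of the 3-vertex path as a (not necessarily induced) subgraph. -/
def containsP3 {V : Type*} (G : SimpleGraph V) : Prop :=
  ∃ f : Fin 3 → V, Function.Injective f ∧
    ∀ a b, (SimpleGraph.pathGraph 3).Adj a b → G.Adj (f a) (f b)

/-- `D` is a `P3`-isolating set of `G`: `G - N[D]` contains no copy of `P3`. -/
def IsP3Isolating {V : Type*} (G : SimpleGraph V) (D : Set V) : Prop :=
  ¬ containsP3 (G.induce (closedNbhd G D)ᶜ)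

/-- The `P3`-isolation number `ι(G, P3)`. -/
noncomputable def iotaP3 {V : Type*} (G : SimpleGraph V) : ℕ :=
  sInf {n | ∃ D : Finset V, D.card = n ∧ IsP3Isolating G ↑D}

/-! A copy of `P3` centred at `v` lies inside `N[v]`, so on at most five vertices fewer than three
vertices survive outside `N[v]`: too few for another `P3`. If `G` has no `P3`, the empty set works. -/

section

variable {V W : Type*} {G : SimpleGraph V}

theorem containsP3.map {H : SimpleGraph W} (e : G ↪g H) (hG : containsP3 G) : containsP3 H := by
  obtain ⟨f, hf, hadj⟩ := hG
  exact ⟨e ∘ f, e.injective.comp hf, fun a b hab => e.map_rel_iff.mpr (hadj a b hab)⟩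

theorem containsP3.three_le_enatCard (hG : containsP3 G) : 3 ≤ ENat.card V := by
  obtain ⟨f, hf, -⟩ := hG
  simpa using ENat.card_le_card_of_injective hf

theorem containsP3.exists_three_le_encard_closedNbhd (hG : containsP3 G) :
    ∃ v, 3 ≤ (closedNbhd G {v}).encard := by
  obtain ⟨f, hf, hadj⟩ := hG
  refine ⟨f 1, ?_⟩
  have hrange : Set.range f ⊆ closedNbhd G {f 1} := by
    rintro _ ⟨i, rfl⟩
    fin_cases i
    · exact Or.inr ⟨f 1, rfl, hadj 1 0 (by simp [pathGraph_adj])⟩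
    · exact Or.inl rfl
    · exact Or.inr ⟨f 1, rfl, hadj 1 2 (by simp [pathGraph_adj])⟩
  simpa using hf.encard_range.trans (Set.encard_le_encard hrange)

theorem isP3Isolating_empty (hG : ¬ containsP3 G) : IsP3Isolating G ∅ :=
  fun h => hG (h.map (Embedding.induce _))

theorem isP3Isolating_of_enatCard_lt {D : Set V}
    (hD : ENat.card V < (closedNbhd G D).encard + 3) : IsP3Isolating G D := by
  intro h
  have hcompl : 3 ≤ (closedNbhd G D)ᶜ.encard := by simpa using h.three_le_enatCard
  have := add_le_add_right hcompl (closedNbhd G D).encard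
  rw [Set.encard_add_encard_compl, Set.encard_univ] at this
  exact this.not_gt hD

theorem iotaP3_le_card {D : Finset V} (hD : IsP3Isolating G D) : iotaP3 G ≤ D.card :=
  Nat.sInf_le ⟨D, rfl, hD⟩

end

/-- If a graph `G` has at most `5` vertices, then `ι(G, P3) ≤ 1`. -/
theorem stmt2 {V : Type*} [Fintype V] (G : SimpleGraph V) (h : Fintype.card V ≤ 5) :
    iotaP3 G ≤ 1 := by
  classical
  by_cases hG : containsP3 G
  · obtain ⟨v, hv⟩ := hG.exists_three_le_encard_closedNbhd
    have hV : ENat.card V < (closedNbhd G {v}).encard + 3 := calc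
      ENat.card V ≤ 5 := by simpa using h
      _ < 3 + 3 := by norm_num
      _ ≤ (closedNbhd G {v}).encard + 3 := by gcongr
    simpa using iotaP3_le_card (D := {v}) (by simpa using isP3Isolating_of_enatCard_lt hV)
  · simpa using (iotaP3_le_card (D := ∅) (by simpa using isP3Isolating_empty hG)).trans zero_le_one
end

section
/- If a graph G has at most 8 vertices, then the P3-isolation number of G is at most 2. -/
open SimpleGraph

lemma extractP3 {V : Type*} {G : SimpleGraph V} {S : Set V}
    (h : containsP3 (G.induce S)) :
    ∃ a b c : V, a ∈ S ∧ b ∈ S ∧ c ∈ S ∧ a ≠ b ∧ a ≠ c ∧ b ≠ c ∧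
      G.Adj b a ∧ G.Adj b c := by
  obtain ⟨f, hinj, hadj⟩ := h
  have h10 : (pathGraph 3).Adj 1 0 := by rw [pathGraph_adj]; simp
  have h12 : (pathGraph 3).Adj 1 2 := by rw [pathGraph_adj]; simp
  have a1 := hadj 1 0 h10
  have a2 := hadj 1 2 h12
  refine ⟨(f 0).1, (f 1).1, (f 2).1, (f 0).2, (f 1).2, (f 2).2, ?_, ?_, ?_, a1, a2⟩
  · exact fun h => (by decide : (0:Fin 3) ≠ 1) (hinj (Subtype.ext h))
  · exact fun h => (by decide : (0:Fin 3) ≠ 2) (hinj (Subtype.ext h))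
  · exact fun h => (by decide : (1:Fin 3) ≠ 2) (hinj (Subtype.ext h))

/-- If a graph `G` has at most `8` vertices, then `ι(G, P3) ≤ 2`. -/
theorem stmt3 {V : Type*} [Fintype V] (G : SimpleGraph V) (h : Fintype.card V ≤ 8) :
    iotaP3 G ≤ 2 := by
  classical
  by_cases h0 : IsP3Isolating G (↑(∅ : Finset V))
  · exact le_trans (Nat.sInf_le (show 0 ∈ {n | ∃ D : Finset V, D.card = n ∧ IsP3Isolating G ↑D} from ⟨∅, by simp, h0⟩)) (by norm_num)
  obtain ⟨a, b, c, _, _, _, hab, hac, hbc, hba, hbc'⟩ := extractP3 (not_not.mp h0)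
  by_cases h1 : IsP3Isolating G (↑({b} : Finset V))
  · exact le_trans (Nat.sInf_le (show 1 ∈ {n | ∃ D : Finset V, D.card = n ∧ IsP3Isolating G ↑D} from ⟨{b}, by simp, h1⟩)) (by norm_num)
  obtain ⟨x, y, z, hxm, hym, hzm, hxy, hxz, hyz, hyx, hyz'⟩ := extractP3 (not_not.mp h1)
  set A : Set V := closedNbhd G (↑({b} : Finset V)) with hA
  -- memberships in A
  have haA : a ∈ A := Or.inr ⟨b, by simp, hba⟩
  have hbA : b ∈ A := Or.inl (by simp)
  have hcA : c ∈ A := Or.inr ⟨b, by simp, hbc'⟩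
  have hxA : x ∉ A := hxm
  have hyA : y ∉ A := hym
  have hzA : z ∉ A := hzm
  have hby : b ≠ y := fun h => hyA (h ▸ hbA)
  set B : Set V := closedNbhd G (↑({b, y} : Finset V)) with hB
  have hAB : A ⊆ B := by
    rintro v (hv | ⟨d, hd, hdv⟩)
    · exact Or.inl (by simp at hv ⊢; tauto)
    · exact Or.inr ⟨d, by simp at hd ⊢; tauto, hdv⟩
  have hyB : y ∈ B := Or.inl (by simp)
  have hxB : x ∈ B := Or.inr ⟨y, by simp, hyx⟩
  have hzB : z ∈ B := Or.inr ⟨y, by simp, hyz'⟩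
  have hiso : IsP3Isolating G (↑({b, y} : Finset V)) := by
    intro hcon
    obtain ⟨p, q, r, hpm, hqm, hrm, hpq, hpr, hqr, _, _⟩ := extractP3 hcon
    have hpB : p ∉ B := hpm
    have hqB : q ∉ B := hqm
    have hrB : r ∉ B := hrm
    -- all nine vertices distinct
    have key : (9 : ℕ) ≤ Fintype.card V := by
      have hnd : ([a, b, c, x, y, z, p, q, r] : List V).Nodup := by
        simp only [List.nodup_cons, List.mem_cons, List.not_mem_nil, or_false,
          List.mem_singleton, List.nodup_nil, and_true, not_or, List.mem_singleton]
        refine ⟨⟨hab, hac, ?_, ?_, ?_, ?_, ?_, ?_⟩, ⟨hbc, ?_, hby, ?_, ?_, ?_, ?_⟩,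
          ⟨?_, ?_, ?_, ?_, ?_, ?_⟩, ⟨hxy, hxz, ?_, ?_, ?_⟩, ⟨hyz, ?_, ?_, ?_⟩,
          ⟨?_, ?_, ?_⟩, ⟨hpq, hpr⟩, hqr, not_false⟩ <;>
          first
          | exact fun h => hxA (h ▸ haA)
          | exact fun h => hyA (h ▸ haA)
          | exact fun h => hzA (h ▸ haA)
          | exact fun h => hxA (h ▸ hbA)
          | exact fun h => hzA (h ▸ hbA)
          | exact fun h => hxA (h ▸ hcA)
          | exact fun h => hyA (h ▸ hcA)
          | exact fun h => hzA (h ▸ hcA)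
          | exact fun h => hpB (h ▸ hAB haA)
          | exact fun h => hqB (h ▸ hAB haA)
          | exact fun h => hrB (h ▸ hAB haA)
          | exact fun h => hpB (h ▸ hAB hbA)
          | exact fun h => hqB (h ▸ hAB hbA)
          | exact fun h => hrB (h ▸ hAB hbA)
          | exact fun h => hpB (h ▸ hAB hcA)
          | exact fun h => hqB (h ▸ hAB hcA)
          | exact fun h => hrB (h ▸ hAB hcA)
          | exact fun h => hpB (h ▸ hxB)
          | exact fun h => hqB (h ▸ hxB)
          | exact fun h => hrB (h ▸ hxB)
          | exact fun h => hpB (h ▸ hyB)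
          | exact fun h => hqB (h ▸ hyB)
          | exact fun h => hrB (h ▸ hyB)
          | exact fun h => hpB (h ▸ hzB)
          | exact fun h => hqB (h ▸ hzB)
          | exact fun h => hrB (h ▸ hzB)
      calc (9 : ℕ) = ([a, b, c, x, y, z, p, q, r] : List V).toFinset.card := by
            rw [List.toFinset_card_of_nodup hnd]; rfl
        _ ≤ Fintype.card V := Finset.card_le_univ _
    omega
  have hcard : ({b, y} : Finset V).card = 2 := by
    rw [Finset.card_insert_of_notMem (by simpa using hby), Finset.card_singleton]
  exact Nat.sInf_le (show 2 ∈ {n | ∃ D : Finset V, D.card = n ∧ IsP3Isolating G ↑D} from ⟨{b, y}, hcard, hiso⟩)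
end

section
/- For the n-vertex path P_n with n ≥ 6, the set {4k : 1 ≤ k ≤ ⌊n/4⌋} is a P3-isolating set, and hence ι(P_n, P3) ≤ n/4. -/
open SimpleGraph

lemma range_filter_card (n : ℕ) :
    ((Finset.range n).filter (fun i => (i + 1) % 4 = 0)).card = n / 4 := by
  induction n with
  | zero => simp
  | succ n ih =>
    rw [Finset.range_add_one, Finset.filter_insert]
    by_cases h : (n + 1) % 4 = 0
    · rw [if_pos h, Finset.card_insert_of_notMem (by simp)]
      omega
    · rw [if_neg h]
      omega

/-- For the path `P_n` (`n ≥ 6`), vertex `i : Fin n` standing for label `i+1`, the set of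
vertices with labels `4k` (`1 ≤ k ≤ ⌊n/4⌋`) is a `P3`-isolating set, and `ι(P_n, P3) ≤ n/4`. -/
theorem stmt4 (n : ℕ) (hn : 6 ≤ n) :
    IsP3Isolating (SimpleGraph.pathGraph n)
      ↑(Finset.univ.filter (fun i : Fin n => (i.val + 1) % 4 = 0)) ∧
    (iotaP3 (SimpleGraph.pathGraph n) : ℝ) ≤ n / 4 := by
  have key : IsP3Isolating (SimpleGraph.pathGraph n)
      ↑(Finset.univ.filter (fun i : Fin n => (i.val + 1) % 4 = 0)) := by
    rintro ⟨f, hinj, hf⟩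
    -- extract membership facts
    have hmem : ∀ i : Fin 3, ((f i : Fin n).val + 1) % 4 ≠ 0 ∧
        ∀ d : Fin n, (d.val + 1) % 4 = 0 →
          ¬ (SimpleGraph.pathGraph n).Adj d (f i) := by
      intro i
      have h2 := (f i).2
      simp only [Set.mem_compl_iff, closedNbhd, Set.mem_setOf_eq, Finset.coe_filter,
        Finset.mem_univ, true_and, not_or, not_exists, not_and] at h2
      exact h2
    -- adjacency facts
    have ha : (SimpleGraph.pathGraph n).Adj (f 0) (f 1) :=
      hf 0 1 (by rw [pathGraph_adj]; left; rfl)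
    have hc : (SimpleGraph.pathGraph n).Adj (f 1) (f 2) :=
      hf 1 2 (by rw [pathGraph_adj]; left; rfl)
    rw [pathGraph_adj] at ha hc
    have hne : ((f 0 : Fin n)).val ≠ ((f 2 : Fin n)).val := by
      intro h
      have : f 0 = f 2 := Subtype.ext (Fin.ext h)
      exact absurd (hinj this) (by decide)
    have hbn : ((f 1 : Fin n)).val < n := ((f 1 : Fin n)).isLt
    have han : ((f 0 : Fin n)).val < n := ((f 0 : Fin n)).isLt
    have hcn : ((f 2 : Fin n)).val < n := ((f 2 : Fin n)).isLt
    have hm0 := (hmem 0).1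
    have hm1 := (hmem 1).1
    have hm2 := (hmem 2).1
    -- one of a, c equals b+1 and one equals b-1
    have hb1 : 1 ≤ ((f 1 : Fin n)).val ∧ ((f 1 : Fin n)).val + 1 < n ∧
        ((f 1 : Fin n)).val % 4 = 1 := by omega
    by_cases hb2 : 2 ≤ ((f 1 : Fin n)).val
    · -- the vertex with value b - 1 has the D-vertex b-2 as neighbour
      have hd : ((⟨((f 1 : Fin n)).val - 2, by omega⟩ : Fin n).val + 1) % 4 = 0 := by simp; omega
      have : ∃ i : Fin 3, ((f i : Fin n)).val = ((f 1 : Fin n)).val - 1 := by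
        rcases ha with h | h
        · exact ⟨0, by omega⟩
        · rcases hc with h' | h'
          · omega
          · exact ⟨2, by omega⟩
      obtain ⟨i, hi⟩ := this
      exact (hmem i).2 ⟨((f 1 : Fin n)).val - 2, by omega⟩ hd (by rw [pathGraph_adj]; left; simp; omega)
    · -- b = 1; the vertex with value b + 1 = 2 has the D-vertex 3 as neighbour
      have hd : ((⟨3, by omega⟩ : Fin n).val + 1) % 4 = 0 := by simp
      have : ∃ i : Fin 3, ((f i : Fin n)).val = ((f 1 : Fin n)).val + 1 := by
        rcases ha with h | h
        · rcases hc with h' | h'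
          · exact ⟨2, by omega⟩
          · omega
        · exact ⟨0, by omega⟩
      obtain ⟨i, hi⟩ := this
      exact (hmem i).2 ⟨3, by omega⟩ hd (by rw [pathGraph_adj]; right; simp; omega)
  refine ⟨key, ?_⟩
  have hcard : (Finset.univ.filter (fun i : Fin n => (i.val + 1) % 4 = 0)).card = n / 4 := by
    rw [← range_filter_card n]
    apply Finset.card_bij (fun i _ => i.val)
    · intro x hx
      simp only [Finset.mem_filter, Finset.mem_univ, true_and] at hx
      simp [x.isLt, hx]
    · intro x _ y _ h
      exact Fin.ext h
    · intro y hy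
      simp only [Finset.mem_filter, Finset.mem_range] at hy
      exact ⟨⟨y, hy.1⟩, by simp [hy.2], rfl⟩
  have h1 : iotaP3 (SimpleGraph.pathGraph n) ≤ n / 4 :=
    Nat.sInf_le ⟨Finset.univ.filter (fun i : Fin n => (i.val + 1) % 4 = 0), hcard, key⟩
  calc (iotaP3 (SimpleGraph.pathGraph n) : ℝ) ≤ ((n / 4 : ℕ) : ℝ) := by exact_mod_cast h1
    _ ≤ n / 4 := Nat.cast_div_le
end

section
/- For the n-vertex cycle C_n, the set {5k−4 : k ∈ ℕ, 5k−4 ≤ n} is a P3-isolating set of C_n of size ⌊(n+4)/5⌋; consequently ι(C_n, P3) ≤ ⌊(n+4)/5⌋. -/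
open SimpleGraph

private lemma cycle_adj_iff {n : ℕ} (hn : 3 ≤ n) (u v : Fin n) :
    (SimpleGraph.cycleGraph n).Adj u v ↔
      ((n - v.val + u.val) % n = 1 ∨ (n - u.val + v.val) % n = 1) := by
  rw [SimpleGraph.cycleGraph_adj', Fin.sub_def, Fin.sub_def]

private lemma mod_var_eq_one {n s : ℕ} (_hn : 0 < n) (hs : s < 2 * n) (h : s % n = 1) :
    s = 1 ∨ s = n + 1 := by
  have h1 := Nat.div_add_mod s n
  have h2 : s / n < 2 := Nat.div_lt_of_lt_mul (by omega)
  interval_cases h3 : s / n <;> rw [h] at h1 <;> omega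

private lemma n_add_one_mod {n : ℕ} (hn : 3 ≤ n) : (n + 1) % n = 1 := by
  rw [Nat.add_mod_left]; exact Nat.mod_eq_of_lt (by omega)

/-- adjacency of consecutive vertices -/
private lemma adj_succ {n : ℕ} (hn : 3 ≤ n) {u v : Fin n} (h : u.val + 1 = v.val) :
    (SimpleGraph.cycleGraph n).Adj u v := by
  rw [cycle_adj_iff hn]
  right
  have hu : u.val < n := u.isLt
  have hv : v.val < n := v.isLt
  have : n - u.val + v.val = n + 1 := by omega
  rw [this]; exact n_add_one_mod hn

private lemma adj_wrap {n : ℕ} (hn : 3 ≤ n) {v : Fin n} (h : v.val = n - 1) :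
    (SimpleGraph.cycleGraph n).Adj ⟨0, by omega⟩ v := by
  rw [cycle_adj_iff hn]
  left
  have h0 : (⟨0, show 0 < n by omega⟩ : Fin n).val = 0 := rfl
  rw [h0, h]
  have : n - (n - 1) + 0 = 1 := by omega
  rw [this]; exact Nat.mod_eq_of_lt (by omega)

private lemma count_lemma (n : ℕ) :
    ((Finset.range n).filter (fun i => i % 5 = 0)).card = (n + 4) / 5 := by
  induction n with
  | zero => simp
  | succ n ih =>
    rw [Finset.range_add_one, Finset.filter_insert]
    by_cases h : n % 5 = 0
    · rw [if_pos h, Finset.card_insert_of_notMem (by simp)]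
      omega
    · rw [if_neg h]
      omega

/-- For the cycle `C_n`, vertex `i : Fin n` standing for label `i+1`, the set of vertices with
labels `5k − 4` is a `P3`-isolating set of size `⌊(n+4)/5⌋`, so `ι(C_n, P3) ≤ ⌊(n+4)/5⌋`. -/
theorem stmt5 (n : ℕ) (hn : 3 ≤ n) :
    IsP3Isolating (SimpleGraph.cycleGraph n)
      ↑(Finset.univ.filter (fun i : Fin n => i.val % 5 = 0)) ∧
    (Finset.univ.filter (fun i : Fin n => i.val % 5 = 0)).card = (n + 4) / 5 ∧
    iotaP3 (SimpleGraph.cycleGraph n) ≤ (n + 4) / 5 := by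
  have hn0 : 0 < n := by omega
  set G := SimpleGraph.cycleGraph n with hG
  set D : Set (Fin n) :=
    ↑(Finset.univ.filter (fun i : Fin n => i.val % 5 = 0)) with hD
  have hmemD : ∀ v : Fin n, v ∈ D ↔ v.val % 5 = 0 := by
    intro v; simp [hD]
  -- facts about vertices outside the closed neighbourhood
  have hcomp : ∀ v : Fin n, v ∈ (closedNbhd G D)ᶜ →
      (v.val % 5 = 2 ∨ v.val % 5 = 3) ∧ 2 ≤ v.val ∧ v.val + 1 < n := by
    intro v hv
    simp only [Set.mem_compl_iff, closedNbhd, Set.mem_setOf_eq, not_or, not_exists] at hv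
    obtain ⟨hv0, hv1⟩ := hv
    rw [hmemD] at hv0
    push_neg at hv1
    -- v is not the last vertex
    have hlast : v.val ≠ n - 1 := by
      intro h
      exact hv1 ⟨0, by omega⟩ ((hmemD _).mpr (by simp)) (adj_wrap hn h)
    -- v.val % 5 ≠ 1
    have h1 : v.val % 5 ≠ 1 := by
      intro h
      have hpos : 1 ≤ v.val := by omega
      refine hv1 ⟨v.val - 1, by omega⟩ ((hmemD _).mpr (by simp; omega)) ?_
      exact adj_succ hn (by simp; omega)
    -- v.val % 5 ≠ 4
    have h4 : v.val % 5 ≠ 4 := by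
      intro h
      have hlt : v.val + 1 < n := by
        have := v.isLt; omega
      refine hv1 ⟨v.val + 1, hlt⟩ ((hmemD _).mpr (by simp; omega)) ?_
      exact (adj_succ hn (u := v) (by simp)).symm
    have := v.isLt
    omega
  -- adjacency inside the complement is between consecutive vertices
  have hadj_cons : ∀ u v : Fin n, u ∈ (closedNbhd G D)ᶜ → v ∈ (closedNbhd G D)ᶜ →
      G.Adj u v → u.val + 1 = v.val ∨ v.val + 1 = u.val := by
    intro u v hu hv hadj
    obtain ⟨_, hu2, hu3⟩ := hcomp u hu
    obtain ⟨_, hv2, hv3⟩ := hcomp v hv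
    rw [cycle_adj_iff hn] at hadj
    rcases hadj with h | h
    · rcases mod_var_eq_one hn0 (by omega) h with h' | h' <;> omega
    · rcases mod_var_eq_one hn0 (by omega) h with h' | h' <;> omega
  have hiso : IsP3Isolating G D := by
    rintro ⟨f, hinj, hadj⟩
    have h01 : G.Adj ↑(f 0) ↑(f 1) := hadj 0 1 (by rw [SimpleGraph.pathGraph_adj]; simp)
    have h12 : G.Adj ↑(f 1) ↑(f 2) := hadj 1 2 (by rw [SimpleGraph.pathGraph_adj]; simp)
    have hne : f 0 ≠ f 2 := fun h => by simpa using hinj h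
    have hvalne : ((f 0 : {v // v ∈ (closedNbhd G D)ᶜ}) : Fin n).val ≠ ((f 2 : _) : Fin n).val := by
      intro h
      exact hne (Subtype.ext (Fin.ext h))
    obtain ⟨hb5, hb2, hb3⟩ := hcomp _ (f 1).prop
    obtain ⟨ha5, _, _⟩ := hcomp _ (f 0).prop
    obtain ⟨hc5, _, _⟩ := hcomp _ (f 2).prop
    have e01 := hadj_cons _ _ (f 0).prop (f 1).prop h01
    have e12 := hadj_cons _ _ (f 1).prop (f 2).prop h12
    omega
  have hcard : (Finset.univ.filter (fun i : Fin n => i.val % 5 = 0)).card = (n + 4) / 5 := by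
    have : (Finset.univ.filter (fun i : Fin n => i.val % 5 = 0)).card
        = ((Finset.range n).filter (fun i => i % 5 = 0)).card := by
      refine Finset.card_nbij (fun i => i.val) ?_ ?_ ?_
      · intro a ha
        simp only [Finset.mem_coe, Finset.mem_filter, Finset.mem_univ, true_and] at ha
        simp only [Finset.mem_coe, Finset.mem_filter, Finset.mem_range]
        exact ⟨a.isLt, ha⟩
      · intro a _ b _ h; exact Fin.ext h
      · intro a ha
        simp only [Finset.coe_filter, Finset.mem_range, Set.mem_setOf_eq] at ha
        exact ⟨⟨a, ha.1⟩, by simp [ha.2], rfl⟩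
    rw [this, count_lemma]
  refine ⟨hiso, hcard, Nat.sInf_le ?_⟩
  show ∃ D' : Finset (Fin n), D'.card = (n + 4) / 5 ∧ IsP3Isolating G ↑D'
  exact ⟨_, hcard, hiso⟩
end

section
/- If G is a connected n-vertex graph with maximum degree at most 2 that is not isomorphic to any of P3, C3, C6, C7, or C11, then ι(G, P3) ≤ n/4. -/
open SimpleGraph

/-
A connected graph of maximum degree two is a path or a cycle: until a path covers every
vertex, connectivity gives a path vertex with a neighbour off the path, and an inner vertex has
no room for one, so the path extends at an end. In a graph of maximum degree two a copy of `P3`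
contains every neighbour of its centre, so `D` isolates `P3` as soon as every possible centre
lies within distance two of `D`. Every fifth vertex does this, so `m` vertices suffice for `P_n`
when `n ≤ 5m + 2` (the ends are never centres) and for `C_n` when `n ≤ 5m`. With `m = ⌊n/4⌋`
these fail only for `P3`, `C3`, `C6`, `C7` and `C11`.
-/

namespace SimpleGraph

variable {V : Type*} {G : SimpleGraph V}

theorem eq_or_eq_of_adj_of_degree_le_two {v a c x : V} [Fintype (G.neighborSet v)]
    (hdeg : G.degree v ≤ 2) (hac : a ≠ c) (ha : G.Adj v a) (hc : G.Adj v c) (hx : G.Adj v x) :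
    x = a ∨ x = c := by
  classical
  by_contra! hxac
  have hsub : ({a, c, x} : Finset V) ⊆ G.neighborFinset v := by
    intro y hy
    simp only [Finset.mem_insert, Finset.mem_singleton] at hy
    rcases hy with rfl | rfl | rfl <;> simpa
  have hcard := Finset.card_le_card hsub
  rw [Finset.card_eq_three.2 ⟨a, c, x, hac, hxac.1.symm, hxac.2.symm, rfl⟩,
    card_neighborFinset_eq_degree] at hcard
  omega

theorem cycleGraph_adj_iff_val {n : ℕ} (hn : 2 ≤ n) {u v : Fin n} :
    (cycleGraph n).Adj u v ↔ (u : ℕ) + 1 = v ∨ (v : ℕ) + 1 = u ∨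
      ((u : ℕ) = 0 ∧ (v : ℕ) = n - 1 ∨ (v : ℕ) = 0 ∧ (u : ℕ) = n - 1) := by
  have hsub : ∀ a b : Fin n,
      ((a - b : Fin n) : ℕ) = 1 ↔ (b : ℕ) + 1 = a ∨ (a : ℕ) = 0 ∧ (b : ℕ) = n - 1 := by
    intro a b
    rcases le_or_gt b a with h | h
    · rw [Fin.coe_sub_iff_le.2 h]
      have : (b : ℕ) ≤ a := h
      omega
    · rw [Fin.coe_sub_iff_lt.2 h]
      have : (a : ℕ) < b := h
      omega
  rw [cycleGraph_adj', hsub, hsub]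
  omega

/-- `f 0, …, f (k - 1)` is a path of `G`; the values of `f` from `k` on play no role. -/
structure IsPathSeq (G : SimpleGraph V) (k : ℕ) (f : ℕ → V) : Prop where
  injOn : Set.InjOn f (Set.Iio k)
  adj : ∀ i, i + 1 < k → G.Adj (f i) (f (i + 1))

namespace IsPathSeq

variable {k : ℕ} {f : ℕ → V}

theorem ne (hf : G.IsPathSeq k f) {i j : ℕ} (hi : i < k) (hj : j < k) (hij : i ≠ j) :
    f i ≠ f j :=
  fun h => hij (hf.injOn hi hj h)

theorem adj_pred (hf : G.IsPathSeq k f) {i : ℕ} (hi0 : 0 < i) (hik : i < k) :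
    G.Adj (f i) (f (i - 1)) := by
  have h := hf.adj (i - 1) (by omega)
  rwa [Nat.sub_add_cancel hi0, adj_comm] at h

theorem reverse (hf : G.IsPathSeq k f) : G.IsPathSeq k (fun i => f (k - 1 - i)) where
  injOn i hi j hj h := by
    simp only [Set.mem_Iio] at hi hj
    have := hf.injOn (show k - 1 - i < k by omega) (show k - 1 - j < k by omega) h
    omega
  adj i hi := by
    have h := hf.adj_pred (i := k - 1 - i) (by omega) (by omega)
    rwa [show k - 1 - i - 1 = k - 1 - (i + 1) by omega] at h

theorem snoc (hf : G.IsPathSeq k f) {w : V} (hw : G.Adj (f (k - 1)) w) (hwf : ∀ i < k, f i ≠ w) :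
    G.IsPathSeq (k + 1) (Function.update f k w) where
  injOn := by
    have hIio : Set.Iio (k + 1) = insert k (Set.Iio k) := by
      ext i
      simp only [Set.mem_Iio, Set.mem_insert_iff]
      omega
    have heq : Set.EqOn f (Function.update f k w) (Set.Iio k) :=
      fun i hi => (Function.update_of_ne (ne_of_lt hi) _ _).symm
    rw [hIio, Set.injOn_insert Set.self_notMem_Iio, ← heq.image_eq, Function.update_self]
    exact ⟨hf.injOn.congr heq, fun ⟨i, hi, h⟩ => hwf i hi h⟩
  adj i hi := by
    rcases eq_or_ne (i + 1) k with hik | hik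
    · rw [hik, Function.update_self, Function.update_of_ne (by omega)]
      rwa [show i = k - 1 by omega]
    · rw [Function.update_of_ne hik, Function.update_of_ne (by omega)]
      exact hf.adj i (by omega)

theorem bijective_of_card [Fintype V] (hf : G.IsPathSeq (Fintype.card V) f) :
    Function.Bijective (fun i : Fin (Fintype.card V) => f i) :=
  (Fintype.bijective_iff_injective_and_card _).2
    ⟨fun i j h => Fin.ext (hf.injOn i.2 j.2 h), Fintype.card_fin _⟩

variable [Fintype V] [DecidableRel G.Adj]

theorem exists_succ (hconn : G.Connected) (hdeg : ∀ v, G.degree v ≤ 2)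
    (hf : G.IsPathSeq k f) (hk : 0 < k) (hkV : k < Fintype.card V) :
    ∃ g, G.IsPathSeq (k + 1) g := by
  classical
  set S := (Finset.range k).image f
  have hS : ∀ {v}, v ∈ S ↔ ∃ i < k, f i = v := by simp [S]
  obtain ⟨w, -, hw⟩ := Finset.exists_mem_notMem_of_card_lt_card
    (s := S) (t := Finset.univ) (Finset.card_image_le.trans_lt (by simpa))
  obtain ⟨p⟩ := hconn.preconnected (f 0) w
  obtain ⟨d, -, hd, hdw⟩ := p.exists_boundary_dart S (hS.2 ⟨0, hk, rfl⟩) hw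
  obtain ⟨i, hi, hfi⟩ := hS.1 hd
  have hwf : ∀ j < k, f j ≠ d.snd := fun j hj h => hdw (hS.2 ⟨j, hj, h⟩)
  have hadj : G.Adj (f i) d.snd := hfi ▸ d.adj
  by_cases hlast : i = k - 1
  · exact ⟨_, hf.snoc (hlast ▸ hadj) hwf⟩
  by_cases hfirst : i = 0
  · refine ⟨_, hf.reverse.snoc ?_ fun j hj => hwf _ (by omega)⟩
    rwa [show k - 1 - (k - 1) = 0 by omega, ← hfirst]
  -- an inner vertex of the path has both its path neighbours, so no room for `d.snd`
  exfalso
  rcases eq_or_eq_of_adj_of_degree_le_two (hdeg _) (hf.ne (by omega) (by omega) (by omega))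
    (hf.adj_pred (by omega) hi) (hf.adj i (by omega)) hadj with h | h <;>
    exact hwf _ (by omega) h.symm

theorem eq_succ_or_of_adj (hdeg : ∀ v, G.degree v ≤ 2) (hf : G.IsPathSeq k f) {i j : ℕ}
    (hij : i < j) (hj : j < k) (h : G.Adj (f i) (f j)) : j = i + 1 ∨ (i = 0 ∧ j = k - 1) := by
  by_contra! hchord
  have hjk : j = k - 1 := by
    by_contra
    rcases eq_or_eq_of_adj_of_degree_le_two (hdeg _) (hf.ne (by omega) (by omega) (by omega))
      (hf.adj_pred (by omega) hj) (hf.adj j (by omega)) h.symm with h' | h' <;>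
      exact hf.ne (by omega) (by omega) (by omega) h'
  have hi0 : i ≠ 0 := fun hi0 => hchord.2 hi0 hjk
  rcases eq_or_eq_of_adj_of_degree_le_two (hdeg _) (hf.ne (by omega) (by omega) (by omega))
    (hf.adj_pred (by omega) (by omega)) (hf.adj i (by omega)) h with h' | h' <;>
    exact hf.ne (by omega) (by omega) (by omega) h'

theorem adj_iff (hdeg : ∀ v, G.degree v ≤ 2) (hf : G.IsPathSeq k f) {i j : ℕ}
    (hi : i < k) (hj : j < k) :
    G.Adj (f i) (f j) ↔ i + 1 = j ∨ j + 1 = i ∨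
      (G.Adj (f 0) (f (k - 1)) ∧ (i = 0 ∧ j = k - 1 ∨ j = 0 ∧ i = k - 1)) := by
  constructor
  · intro h
    rcases lt_trichotomy i j with hij | rfl | hij
    · rcases hf.eq_succ_or_of_adj hdeg hij hj h with h' | ⟨rfl, rfl⟩
      · omega
      · exact Or.inr (Or.inr ⟨h, by omega⟩)
    · exact absurd h (G.loopless.irrefl _)
    · rcases hf.eq_succ_or_of_adj hdeg hij hi h.symm with h' | ⟨rfl, rfl⟩
      · omega
      · exact Or.inr (Or.inr ⟨h.symm, by omega⟩)
  · rintro (rfl | rfl | ⟨h, ⟨rfl, rfl⟩ | ⟨rfl, rfl⟩⟩)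
    · exact hf.adj i hj
    · exact (hf.adj j hi).symm
    · exact h
    · exact h.symm

end IsPathSeq

variable [Fintype V] [DecidableRel G.Adj]

theorem exists_isPathSeq_card (hconn : G.Connected) (hdeg : ∀ v, G.degree v ≤ 2) :
    ∃ f, G.IsPathSeq (Fintype.card V) f := by
  have hV : 0 < Fintype.card V := Fintype.card_pos_iff.2 hconn.nonempty
  suffices h : ∀ k, 1 ≤ k → k ≤ Fintype.card V → ∃ f, G.IsPathSeq k f from h _ hV le_rfl
  intro k hk
  induction k, hk using Nat.le_induction with
  | base =>
    intro _
    obtain ⟨v⟩ := hconn.nonempty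
    exact ⟨fun _ => v, fun i hi j hj _ => by simp_all, fun i hi => by omega⟩
  | succ k hk ih =>
    intro hkV
    obtain ⟨f, hf⟩ := ih (by omega)
    exact hf.exists_succ hconn hdeg hk (by omega)

theorem exists_iso_pathGraph_or_cycleGraph (hconn : G.Connected) (hdeg : ∀ v, G.degree v ≤ 2) :
    Nonempty (G ≃g pathGraph (Fintype.card V)) ∨
      3 ≤ Fintype.card V ∧ Nonempty (G ≃g cycleGraph (Fintype.card V)) := by
  obtain ⟨f, hf⟩ := exists_isPathSeq_card hconn hdeg
  have iso : ∀ H : SimpleGraph (Fin (Fintype.card V)),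
      (∀ i j : Fin (Fintype.card V), G.Adj (f i) (f j) ↔ H.Adj i j) → Nonempty (G ≃g H) :=
    fun H hH => ⟨Iso.symm ⟨Equiv.ofBijective _ hf.bijective_of_card, hH _ _⟩⟩
  by_cases hcyc : 3 ≤ Fintype.card V ∧ G.Adj (f 0) (f (Fintype.card V - 1))
  · refine Or.inr ⟨hcyc.1, iso _ fun i j => ?_⟩
    rw [hf.adj_iff hdeg i.2 j.2, cycleGraph_adj_iff_val (by omega)]
    simp only [hcyc.2, true_and]
  · refine Or.inl (iso _ fun i j => ?_)
    rw [pathGraph_adj]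
    refine ⟨fun h => ?_, fun h => (hf.adj_iff hdeg i.2 j.2).2 (by omega)⟩
    have hij : (i : ℕ) ≠ j := fun hij => G.loopless.irrefl _ (hij ▸ h)
    rcases (hf.adj_iff hdeg i.2 j.2).1 h with h' | h' | ⟨hA, hC⟩
    · exact Or.inl h'
    · exact Or.inr h'
    · have : ¬ 3 ≤ Fintype.card V := fun h3 => hcyc ⟨h3, hA⟩
      omega

end SimpleGraph

section Isolation

variable {V W : Type*} {G : SimpleGraph V} {H : SimpleGraph W}

theorem isP3Isolating_of_forall_centre [Fintype V] [DecidableRel G.Adj]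
    (hdeg : ∀ v, G.degree v ≤ 2) {D : Set V}
    (hD : ∀ a b c, a ≠ c → G.Adj a b → G.Adj b c → ∃ x ∈ closedNbhd G D, x = b ∨ G.Adj b x) :
    IsP3Isolating G D := by
  rintro ⟨g, hg, hadj⟩
  have hadj' : ∀ i j : Fin 3, (i : ℕ) + 1 = j → G.Adj (g i) (g j) :=
    fun i j h => hadj i j (pathGraph_adj.2 (Or.inl h))
  have h02 : (g 0 : V) ≠ g 2 := fun h => absurd (hg (Subtype.ext h)) (by decide)
  obtain ⟨x, hxD, rfl | hx⟩ := hD _ _ _ h02 (hadj' 0 1 rfl) (hadj' 1 2 rfl)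
  · exact (g 1).2 hxD
  -- the two path neighbours of the centre are all its neighbours
  rcases eq_or_eq_of_adj_of_degree_le_two (hdeg _) h02 (hadj' 0 1 rfl).symm (hadj' 1 2 rfl) hx
    with rfl | rfl
  · exact (g 0).2 hxD
  · exact (g 2).2 hxD

theorem IsP3Isolating.comap_iso (e : G ≃g H) {D : Set W} (hD : IsP3Isolating H D) :
    IsP3Isolating G (e ⁻¹' D) := by
  have hN : ∀ v, e v ∈ closedNbhd H D → v ∈ closedNbhd G (e ⁻¹' D) := by
    rintro v (hv | ⟨d, hd, hdv⟩)
    · exact Or.inl hv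
    · exact Or.inr ⟨e.symm d, by simpa using hd, by simpa [← e.map_adj_iff] using hdv⟩
  rintro ⟨g, hg, hadj⟩
  exact hD ⟨fun i => ⟨e (g i), fun h => (g i).2 (hN _ h)⟩,
    fun i j h => hg (Subtype.ext (e.injective (congrArg Subtype.val h))),
    fun i j h => e.map_adj_iff.2 (hadj i j h)⟩

theorem iotaP3_le_of_iso (e : G ≃g H) {D : Finset W} (hD : IsP3Isolating H D) :
    iotaP3 G ≤ D.card := by
  refine Nat.sInf_le ⟨D.map e.symm.toEquiv.toEmbedding, Finset.card_map _, ?_⟩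
  convert hD.comap_iso e
  ext v
  simp [e.symm_apply_eq]

end Isolation

section Fin

variable {n : ℕ}

instance pathGraph.adjDecidable : DecidableRel (pathGraph n).Adj :=
  fun _ _ => decidable_of_iff _ pathGraph_adj.symm

theorem pathGraph_degree_le_two (v : Fin n) : (pathGraph n).degree v ≤ 2 := by
  by_contra! h
  rw [← card_neighborFinset_eq_degree] at h
  obtain ⟨a, b, c, ha, hb, hc, hab, hac, hbc⟩ := Finset.two_lt_card_iff.1 h
  simp only [mem_neighborFinset, pathGraph_adj] at ha hb hc
  simp only [ne_eq, Fin.ext_iff] at hab hac hbc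
  omega

theorem exists_mem_closedNbhd_of_near {H : SimpleGraph (Fin n)} (hH : pathGraph n ≤ H)
    {D : Set (Fin n)} {b d : Fin n} (hd : d ∈ D) (hbd : (b : ℕ) ≤ d + 2) (hdb : (d : ℕ) ≤ b + 2) :
    ∃ x ∈ closedNbhd H D, x = b ∨ H.Adj b x := by
  have hN : ∀ u : Fin n, (u : ℕ) = d ∨ (u : ℕ) + 1 = d ∨ (d : ℕ) + 1 = u → u ∈ closedNbhd H D := by
    rintro u (h | h)
    · exact Or.inl (Fin.ext h ▸ hd)
    · exact Or.inr ⟨d, hd, hH (pathGraph_adj.2 h.symm)⟩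
  by_cases hb : (b : ℕ) = d ∨ (b : ℕ) + 1 = d ∨ (d : ℕ) + 1 = b
  · exact ⟨b, hN b hb, Or.inl rfl⟩
  by_cases hlt : (b : ℕ) < d
  · exact ⟨⟨b + 1, by omega⟩, hN _ (by simp only; omega), Or.inr (hH (pathGraph_adj.2 (by simp)))⟩
  · exact ⟨⟨b - 1, by omega⟩, hN _ (by simp only; omega),
      Or.inr (hH (pathGraph_adj.2 (by simp only; omega)))⟩

theorem exists_finset_forall_near (n m lo : ℕ) (h : n ≤ 5 * m + 2 * lo) :
    ∃ D : Finset (Fin n), D.card ≤ m ∧ ∀ b : Fin n, lo ≤ (b : ℕ) → (b : ℕ) + lo < n →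
      ∃ d ∈ D, (b : ℕ) ≤ d + 2 ∧ (d : ℕ) ≤ b + 2 := by
  rcases Nat.eq_zero_or_pos n with rfl | hn
  · exact ⟨∅, by simp, fun b => b.elim0⟩
  let pos : Fin m → Fin n := fun k => ⟨min (lo + 2 + 5 * k) (n - lo - 3), by omega⟩
  refine ⟨Finset.univ.image pos, Finset.card_image_le.trans (by simp), fun b h1 h2 => ?_⟩
  have hk : ((b : ℕ) - lo) / 5 < m := by omega
  exact ⟨pos ⟨_, hk⟩, Finset.mem_image_of_mem _ (Finset.mem_univ _), by simp only [pos]; omega,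
    by simp only [pos]; omega⟩

theorem exists_isP3Isolating_of_pathGraph_le {H : SimpleGraph (Fin n)} [DecidableRel H.Adj]
    (hH : pathGraph n ≤ H) (hdeg : ∀ v, H.degree v ≤ 2) {m lo : ℕ}
    (hcentre : ∀ a b c, a ≠ c → H.Adj a b → H.Adj b c → lo ≤ (b : ℕ) ∧ (b : ℕ) + lo < n)
    (hn : n ≤ 5 * m + 2 * lo) :
    ∃ D : Finset (Fin n), D.card ≤ m ∧ IsP3Isolating H D := by
  obtain ⟨D, hDm, hD⟩ := exists_finset_forall_near n m lo hn
  refine ⟨D, hDm, isP3Isolating_of_forall_centre hdeg fun a b c hac hab hbc => ?_⟩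
  obtain ⟨h1, h2⟩ := hcentre a b c hac hab hbc
  obtain ⟨d, hd, hbd, hdb⟩ := hD b h1 h2
  exact exists_mem_closedNbhd_of_near hH (Finset.mem_coe.2 hd) hbd hdb

theorem exists_isP3Isolating_pathGraph {m : ℕ} (hn : n ≤ 5 * m + 2) :
    ∃ D : Finset (Fin n), D.card ≤ m ∧ IsP3Isolating (pathGraph n) D :=
  exists_isP3Isolating_of_pathGraph_le le_rfl pathGraph_degree_le_two (lo := 1)
    (fun a b c hac hab hbc => by
      rw [pathGraph_adj] at hab hbc
      simp only [ne_eq, Fin.ext_iff] at hac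
      omega)
    (by omega)

theorem exists_isP3Isolating_cycleGraph {m : ℕ} (h3 : 3 ≤ n) (hn : n ≤ 5 * m) :
    ∃ D : Finset (Fin n), D.card ≤ m ∧ IsP3Isolating (cycleGraph n) D := by
  obtain ⟨n, rfl⟩ : ∃ k, n = k + 3 := ⟨n - 3, by omega⟩
  exact exists_isP3Isolating_of_pathGraph_le pathGraph_le_cycleGraph
    (fun _ => cycleGraph_degree_three_le.le) (lo := 0) (fun a b c _ _ _ => by omega) (by omega)

end Fin

theorem stmt6_general {V : Type*} [Fintype V] (G : SimpleGraph V)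
    [DecidableRel G.Adj] (hconn : G.Connected) (hdeg : ∀ v, G.degree v ≤ 2)
    (h3 : ¬ Nonempty (G ≃g SimpleGraph.pathGraph 3))
    (hc3 : ¬ Nonempty (G ≃g SimpleGraph.cycleGraph 3))
    (hc6 : ¬ Nonempty (G ≃g SimpleGraph.cycleGraph 6))
    (hc7 : ¬ Nonempty (G ≃g SimpleGraph.cycleGraph 7))
    (hc11 : ¬ Nonempty (G ≃g SimpleGraph.cycleGraph 11)) :
    (iotaP3 G : ℝ) ≤ (Fintype.card V : ℝ) / 4 := by
  set n := Fintype.card V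
  suffices h : iotaP3 G ≤ n / 4 from (Nat.cast_le.2 h).trans Nat.cast_div_le
  rcases exists_iso_pathGraph_or_cycleGraph hconn hdeg with ⟨⟨e⟩⟩ | ⟨hn3, ⟨e⟩⟩
  · have : n ≠ 3 := fun h => h3 ⟨h ▸ e⟩
    obtain ⟨D, hD, hDiso⟩ := exists_isP3Isolating_pathGraph (n := n) (m := n / 4) (by omega)
    exact (iotaP3_le_of_iso e hDiso).trans hD
  · have : n ≠ 3 ∧ n ≠ 6 ∧ n ≠ 7 ∧ n ≠ 11 :=
      ⟨fun h => hc3 (h ▸ ⟨e⟩), fun h => hc6 (h ▸ ⟨e⟩), fun h => hc7 (h ▸ ⟨e⟩),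
        fun h => hc11 (h ▸ ⟨e⟩)⟩
    obtain ⟨D, hD, hDiso⟩ := exists_isP3Isolating_cycleGraph (m := n / 4) hn3 (by omega)
    exact (iotaP3_le_of_iso e hDiso).trans hD

/-- If `G` is a connected `n`-vertex graph with maximum degree at most `2` that is not a copy of
`P3`, `C3`, `C6`, `C7` or `C11`, then `ι(G, P3) ≤ n/4`. -/
theorem stmt6 {V : Type*} [Fintype V] [DecidableEq V] (G : SimpleGraph V)
    [DecidableRel G.Adj] (hconn : G.Connected) (hdeg : ∀ v, G.degree v ≤ 2)
    (h3 : ¬ Nonempty (G ≃g SimpleGraph.pathGraph 3))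
    (hc3 : ¬ Nonempty (G ≃g SimpleGraph.cycleGraph 3))
    (hc6 : ¬ Nonempty (G ≃g SimpleGraph.cycleGraph 6))
    (hc7 : ¬ Nonempty (G ≃g SimpleGraph.cycleGraph 7))
    (hc11 : ¬ Nonempty (G ≃g SimpleGraph.cycleGraph 11)) :
    (iotaP3 G : ℝ) ≤ (Fintype.card V : ℝ) / 4 :=
  stmt6_general G hconn hdeg h3 hc3 hc6 hc7 hc11
end

section
/- ι(C11, P3) = 3, that is, the 11-cycle has P3-isolation number exactly 3. -/
/-!
The set `{0, 4, 8}` dominates every vertex of `C₁₁` except `2` and `6`, and two vertices cannot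
carry a `P₃`. Conversely, the closed neighbourhood of at most two vertices is covered by two arcs
of three vertices, so the remaining (at least five) vertices form at most two arcs, one of which
contains three consecutive vertices, i.e. a `P₃`.
-/

open SimpleGraph

section P3Isolation

variable {V : Type*} {G : SimpleGraph V}

lemma closedNbhd_mono {D E : Set V} (h : D ⊆ E) : closedNbhd G D ⊆ closedNbhd G E :=
  fun _ ↦ Or.imp (@h _) fun ⟨d, hd, hadj⟩ ↦ ⟨d, h hd, hadj⟩

lemma IsP3Isolating.mono {D E : Set V} (hD : IsP3Isolating G D) (h : D ⊆ E) :
    IsP3Isolating G E := by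
  rintro ⟨f, hinj, hadj⟩
  refine hD ⟨Set.inclusion (Set.compl_subset_compl.mpr (closedNbhd_mono h)) ∘ f, ?_, hadj⟩
  exact (Set.inclusion_injective _).comp hinj

lemma isP3Isolating_of_ncard_compl_lt_three [Finite V] {D : Set V}
    (h : (closedNbhd G D)ᶜ.ncard < 3) : IsP3Isolating G D := by
  rintro ⟨f, hinj, -⟩
  have := Nat.card_le_card_of_injective f hinj
  simp only [Nat.card_eq_fintype_card, Fintype.card_fin, Nat.card_coe_set_eq] at this
  omega

lemma not_isP3Isolating_of_adj_adj {D : Set V} {u v w : V} (huw : u ≠ w)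
    (huv : G.Adj u v) (hvw : G.Adj v w) (hu : u ∉ closedNbhd G D)
    (hv : v ∉ closedNbhd G D) (hw : w ∉ closedNbhd G D) : ¬ IsP3Isolating G D := by
  refine not_not.mpr ⟨![⟨u, hu⟩, ⟨v, hv⟩, ⟨w, hw⟩], ?_, ?_⟩
  · intro a b hab
    fin_cases a <;> fin_cases b <;>
      simp_all [Subtype.ext_iff, huv.ne, hvw.ne, huv.ne.symm, hvw.ne.symm]
  · intro a b hab
    rw [pathGraph_adj] at hab
    fin_cases a <;> fin_cases b <;> simp_all [huv.symm, hvw.symm]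

lemma iotaP3_eq_of_isP3Isolating {k : ℕ} (D : Finset V) (hcard : D.card = k)
    (hD : IsP3Isolating G D) (hmin : ∀ D : Finset V, D.card < k → ¬ IsP3Isolating G D) :
    iotaP3 G = k := by
  have hk : k ∈ {n | ∃ D : Finset V, D.card = n ∧ IsP3Isolating G D} := ⟨D, hcard, hD⟩
  refine le_antisymm (Nat.sInf_le hk) (le_csInf ⟨k, hk⟩ ?_)
  rintro n ⟨E, rfl, hE⟩
  exact not_lt.mp fun hlt ↦ hmin E hlt hE

end P3Isolation

lemma cycleGraph_adj_add_one {n : ℕ} (i : Fin (n + 2)) : (cycleGraph (n + 2)).Adj i (i + 1) :=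
  cycleGraph_adj.mpr (Or.inr (add_sub_cancel_left i 1))

lemma Finset.exists_subset_pair_of_card_le_two {α : Type*} [DecidableEq α] [Nonempty α]
    {s : Finset α} (hs : s.card ≤ 2) : ∃ a b, s ⊆ {a, b} := by
  interval_cases h : s.card
  · obtain ⟨a⟩ := ‹Nonempty α›
    exact ⟨a, a, by simp [Finset.card_eq_zero.mp h]⟩
  · obtain ⟨a, rfl⟩ := Finset.card_eq_one.mp h
    exact ⟨a, a, by simp⟩
  · obtain ⟨a, b, -, rfl⟩ := Finset.card_eq_two.mp h
    exact ⟨a, b, subset_rfl⟩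

lemma compl_closedNbhd_cycleGraph_eleven :
    (closedNbhd (cycleGraph 11) ↑({0, 4, 8} : Finset (Fin 11)))ᶜ = {2, 6} := by
  ext v
  simp only [closedNbhd, Finset.coe_insert, Finset.coe_singleton, Set.mem_compl_iff,
    Set.mem_ofPred_eq, Set.mem_insert_iff, Set.mem_singleton_iff]
  revert v
  decide

lemma exists_consecutive_not_mem_closedNbhd_cycleGraph_eleven (a b : Fin 11) :
    ∃ i, i ∉ closedNbhd (cycleGraph 11) {a, b} ∧
      i + 1 ∉ closedNbhd (cycleGraph 11) {a, b} ∧ i + 2 ∉ closedNbhd (cycleGraph 11) {a, b} := by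
  simp only [closedNbhd, Set.mem_ofPred_eq, Set.mem_insert_iff, Set.mem_singleton_iff]
  revert a b
  decide

lemma not_isP3Isolating_cycleGraph_eleven_of_card_le_two {D : Finset (Fin 11)}
    (hD : D.card ≤ 2) : ¬ IsP3Isolating (cycleGraph 11) D := by
  obtain ⟨a, b, hab⟩ := D.exists_subset_pair_of_card_le_two hD
  obtain ⟨i, hi, hi₁, hi₂⟩ := exists_consecutive_not_mem_closedNbhd_cycleGraph_eleven a b
  have hi₁₂ : (cycleGraph 11).Adj (i + 1) (i + 2) := by
    convert cycleGraph_adj_add_one (n := 9) (i + 1) using 1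
    rw [add_assoc]
    rfl
  exact fun hiso ↦ not_isP3Isolating_of_adj_adj (by simp) (cycleGraph_adj_add_one i) hi₁₂
    hi hi₁ hi₂ (hiso.mono (by simpa using Finset.coe_subset.mpr hab))

/-- The `11`-cycle has `P3`-isolation number exactly `3`. -/
theorem stmt9 : iotaP3 (SimpleGraph.cycleGraph 11) = 3 := by
  refine iotaP3_eq_of_isP3Isolating {0, 4, 8} rfl ?_ fun D hD ↦ ?_
  · apply isP3Isolating_of_ncard_compl_lt_three
    rw [compl_closedNbhd_cycleGraph_eleven, Set.ncard_pair (by decide)]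
    norm_num
  · exact not_isP3Isolating_cycleGraph_eleven_of_card_le_two (by omega)
end

section
/- In the graph G15, the minimum distance between any two distinct vertices of degree 2 is exactly 4. -/
/-!
The vertices of degree 2 are `0`, `7` and `11` (the paper's `1`, `8` and `12`). A walk
`7 - 6 - 5 - 4 - 11` gives `d(7, 11) ≤ 4`. For the lower bounds, any `f : V → ℕ` that increases by
at most one along each edge satisfies `f w - f v ≤ d(v, w)`; the distance functions from `0` and
from `7`, written down explicitly, separate the three pairs by at least `4`.
-/

open SimpleGraph

/-- The graph `G₁₅` of the paper, with vertices `0,…,14` standing for `1,…,15`. -/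
def G15graph : SimpleGraph (Fin 15) :=
  SimpleGraph.fromRel (fun u v => ((u.val, v.val) ∈
    [(0,1),(0,14),(1,14),(1,2),(2,3),(2,12),(3,11),(11,4),(3,13),(4,5),(4,9),
     (5,6),(5,10),(6,7),(6,8),(7,8),(8,9),(9,10),(10,12),(12,13),(13,14)] : Prop))

noncomputable instance : DecidableRel G15graph.Adj := Classical.decRel _

namespace SimpleGraph

variable {V : Type*} {G : SimpleGraph V} {f : V → ℕ}

theorem Walk.le_add_length_of_adj_le (hf : ∀ a b, G.Adj a b → f b ≤ f a + 1) {v w : V}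
    (p : G.Walk v w) : f w ≤ f v + p.length := by
  induction p with
  | nil => simp
  | cons hadj _ ih =>
    rw [Walk.length_cons]
    have := hf _ _ hadj
    omega

theorem Reachable.sub_le_dist_of_adj_le (hf : ∀ a b, G.Adj a b → f b ≤ f a + 1) {v w : V}
    (h : G.Reachable v w) : f w - f v ≤ G.dist v w := by
  obtain ⟨p, hp⟩ := h.exists_walk_length_eq_dist
  have := p.le_add_length_of_adj_le hf
  omega

end SimpleGraph

namespace G15graph

theorem degree_eq_two_iff (v : Fin 15) :
    G15graph.degree v = 2 ↔ v = 0 ∨ v = 7 ∨ v = 11 := by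
  rw [← card_neighborFinset_eq_degree, neighborFinset_eq_filter]
  simp only [G15graph, fromRel_adj]
  revert v
  decide

def distFromZero : Fin 15 → ℕ := ![0, 1, 2, 3, 5, 5, 6, 7, 6, 5, 4, 4, 3, 2, 1]

def distFromSeven : Fin 15 → ℕ := ![7, 6, 5, 5, 3, 2, 1, 0, 1, 2, 3, 4, 4, 5, 6]

theorem distFromZero_adj_le :
    ∀ a b, G15graph.Adj a b → distFromZero b ≤ distFromZero a + 1 := by
  simp only [G15graph, fromRel_adj]
  decide

theorem distFromSeven_adj_le :
    ∀ a b, G15graph.Adj a b → distFromSeven b ≤ distFromSeven a + 1 := by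
  simp only [G15graph, fromRel_adj]
  decide

def walkZeroEleven : G15graph.Walk 0 11 :=
  .cons (v := 1) (by simp [G15graph]) <| .cons (v := 2) (by simp [G15graph]) <|
    .cons (v := 3) (by simp [G15graph]) <| .cons (by simp [G15graph]) .nil

def walkSevenEleven : G15graph.Walk 7 11 :=
  .cons (v := 6) (by simp [G15graph]) <| .cons (v := 5) (by simp [G15graph]) <|
    .cons (v := 4) (by simp [G15graph]) <| .cons (by simp [G15graph]) .nil

theorem reachable_zero_eleven : G15graph.Reachable 0 11 := ⟨walkZeroEleven⟩

theorem reachable_seven_eleven : G15graph.Reachable 7 11 := ⟨walkSevenEleven⟩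

theorem four_le_dist_zero_eleven : 4 ≤ G15graph.dist 0 11 :=
  reachable_zero_eleven.sub_le_dist_of_adj_le distFromZero_adj_le

theorem four_le_dist_zero_seven : 4 ≤ G15graph.dist 0 7 :=
  le_trans (by decide) <|
    (reachable_zero_eleven.trans reachable_seven_eleven.symm).sub_le_dist_of_adj_le
      distFromZero_adj_le

theorem dist_seven_eleven : G15graph.dist 7 11 = 4 :=
  le_antisymm (dist_le walkSevenEleven)
    (reachable_seven_eleven.sub_le_dist_of_adj_le distFromSeven_adj_le)

end G15graph

/-- In `G₁₅`, the minimum distance between two distinct vertices of degree `2` is exactly `4`. -/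
theorem stmt13 :
    (∀ v w : Fin 15, v ≠ w → G15graph.degree v = 2 → G15graph.degree w = 2 →
      4 ≤ G15graph.dist v w) ∧
    (∃ v w : Fin 15, v ≠ w ∧ G15graph.degree v = 2 ∧ G15graph.degree w = 2 ∧
      G15graph.dist v w = 4) := by
  refine ⟨fun v w hne hv hw => ?_, 7, 11, by decide, (G15graph.degree_eq_two_iff 7).2 (by decide),
    (G15graph.degree_eq_two_iff 11).2 (by decide), G15graph.dist_seven_eleven⟩
  have h011 := G15graph.four_le_dist_zero_eleven
  have h07 := G15graph.four_le_dist_zero_seven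
  have h711 := G15graph.dist_seven_eleven.ge
  rw [G15graph.degree_eq_two_iff] at hv hw
  rcases hv with rfl | rfl | rfl <;> rcases hw with rfl | rfl | rfl <;>
    first | exact absurd rfl hne | assumption | (rw [dist_comm]; assumption)
end
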